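/- Rolle's theorem for regulated functions: Let f be regulated on (a,b), α strictly increasing on (a,b), with (D_α f)(x) existing for all x ∈ (a,b). If f^+(s) = f^-(t) for some a < s < t < b, then there exist u, v ∈ (s,t) with (D_α f)(u) · (D_α f)(v) ≤ 0. -/

import Mathlib

open Filter Topology Function Set MeasureTheory

/-- `x` lies in the interval `(a, b)` with extended-real endpoints. -/
def MemI (a b : EReal) (x : ℝ) : Prop := a < (x : EReal) ∧ (x : EReal) < b

/-- `f` is regulated on `(a, b)`: both one-sided limits exist (as real numbers)
at every point of `(a, b)`. -/
def RegulatedOn' (f : ℝ → ℝ) (a b : EReal) : Prop :=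
  ∀ x : ℝ, MemI a b x →
    (∃ L : ℝ, Tendsto f (𝓝[<] x) (𝓝 L)) ∧ ∃ R : ℝ, Tendsto f (𝓝[>] x) (𝓝 R)

/-- The symmetric `α`-derivative of `f` at `x` equals `A`:
`(D_α f)(x) = lim_{h↓0} (f⁻(x+h) - f⁺(x-h)) / (α⁻(x+h) - α⁺(x-h))`. -/
def HasDerivAlpha (f α : ℝ → ℝ) (x A : ℝ) : Prop :=
  Tendsto (fun h : ℝ =>
      (leftLim f (x + h) - rightLim f (x - h)) /
        (leftLim α (x + h) - rightLim α (x - h)))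
    (𝓝[>] (0 : ℝ)) (𝓝 A)

/-- The filter of real numbers approaching `b : EReal` from the left (`x ↑ b`). -/
noncomputable def leftFilter (b : EReal) : Filter ℝ := comap (fun x : ℝ => (x : EReal)) (𝓝[<] b)

/-- The filter of real numbers approaching `a : EReal` from the right (`x ↓ a`). -/
noncomputable def rightFilter (a : EReal) : Filter ℝ := comap (fun x : ℝ => (x : EReal)) (𝓝[>] a)

/-! If `0 < D u * D v` on `(s, t)`, then `0 < c * D x` there for the constant `c = D u₀`. As the
denominators `α⁻(x + h) - α⁺(x - h)` are positive, `P = c * f⁺` and `Q = c * f⁻` then satisfy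
`P (x - h) < Q (x + h)` for small `h > 0`, while regulatedness gives `Q → P x` from the right and
`P → Q x` from the left. A supremum argument shows that such a `P` is monotone on `(s, t)`, and
the strict symmetric inequality at one point then yields `P s < Q t`, contradicting
`f⁺(s) = f⁻(t)`. -/

section OneSidedLimits

variable {α β : Type*} [LinearOrder α] [TopologicalSpace α] [OrderTopology α]
  [TopologicalSpace β] [RegularSpace β]

theorem tendsto_leftLim_nhdsGT_of_tendsto [NoMaxOrder α] {f : α → β} {x : α} {R : β}
    (h : Tendsto f (𝓝[>] x) (𝓝 R)) : Tendsto (leftLim f) (𝓝[>] x) (𝓝 R) := by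
  refine (closed_nhds_basis R).tendsto_right_iff.2 fun U ⟨hUR, hUc⟩ => ?_
  obtain ⟨u, hxu, hu⟩ := mem_nhdsGT_iff_exists_Ioo_subset.1 (h hUR)
  filter_upwards [Ioo_mem_nhdsGT hxu] with y hy
  refine hUc.mem_of_mapClusterPt (mapClusterPt_leftLim f y) ?_
  filter_upwards [Ioc_mem_nhdsLE hy.1] with z hz using hu ⟨hz.1, hz.2.trans_lt hy.2⟩

theorem tendsto_rightLim_nhdsLT_of_tendsto [NoMinOrder α] {f : α → β} {x : α} {L : β}
    (h : Tendsto f (𝓝[<] x) (𝓝 L)) : Tendsto (rightLim f) (𝓝[<] x) (𝓝 L) :=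
  tendsto_leftLim_nhdsGT_of_tendsto (α := αᵒᵈ) h

end OneSidedLimits

theorem StrictMonoOn.rightLim_lt_leftLim {α β : Type*} [LinearOrder α] [TopologicalSpace α]
    [OrderTopology α] [DenselyOrdered α] [LinearOrder β] [TopologicalSpace β]
    [OrderClosedTopology β] {g : α → β} {U : Set α} (hg : StrictMonoOn g U) {w y : α}
    (hwy : w < y) (hU : Icc w y ⊆ U) : rightLim g w < leftLim g y := by
  obtain ⟨p, hwp, hpy⟩ := exists_between hwy
  obtain ⟨q, hpq, hqy⟩ := exists_between hpy
  have hmono := hg.monotoneOn.mono hU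
  have hw : rightLim g w ≤ g p := by
    refine isClosed_Iic.mem_of_mapClusterPt (mapClusterPt_rightLim g w) ?_
    filter_upwards [Ico_mem_nhdsGE hwp] with z hz
    exact hmono ⟨hz.1, hz.2.le.trans (hpq.trans hqy).le⟩ ⟨hwp.le, (hpq.trans hqy).le⟩ hz.2.le
  have hy : g q ≤ leftLim g y := by
    refine isClosed_Ici.mem_of_mapClusterPt (mapClusterPt_leftLim g y) ?_
    filter_upwards [Ioc_mem_nhdsLE hqy] with z hz
    exact hmono ⟨(hwp.trans hpq).le, hqy.le⟩ ⟨(hwp.trans hpq).le.trans hz.1.le, hz.2⟩ hz.1.le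
  exact hw.trans_lt ((hg (hU ⟨hwp.le, hpy.le⟩) (hU ⟨(hwp.trans hpq).le, hqy.le⟩) hpq).trans_le hy)

section SymmetricIncrease

variable {s t : ℝ} {P Q : ℝ → ℝ}

theorem le_of_eventually_sub_lt_add {x : ℝ} (hsymm : ∀ᶠ h in 𝓝[>] 0, P (x - h) < Q (x + h))
    (hright : Tendsto Q (𝓝[>] x) (𝓝 (P x))) (hleft : Tendsto P (𝓝[<] x) (𝓝 (Q x))) :
    Q x ≤ P x :=
  le_of_tendsto_of_tendsto (hleft.comp (by rw [Tendsto, map_subLeft_nhdsGT, sub_zero]))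
    (hright.comp (by rw [Tendsto, map_add_left_nhdsGT, add_zero])) (hsymm.mono fun _ => le_of_lt)

theorem monotoneOn_of_eventually_sub_lt_add
    (hsymm : ∀ x ∈ Ioo s t, ∀ᶠ h in 𝓝[>] 0, P (x - h) < Q (x + h))
    (hright : ∀ x ∈ Ioo s t, Tendsto Q (𝓝[>] x) (𝓝 (P x)))
    (hleft : ∀ x ∈ Ioo s t, Tendsto P (𝓝[<] x) (𝓝 (Q x))) :
    MonotoneOn P (Ioo s t) := by
  have hQP : ∀ z ∈ Ioo s t, Q z ≤ P z := fun z hz =>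
    le_of_eventually_sub_lt_add (hsymm z hz) (hright z hz) (hleft z hz)
  intro x hx y hy hxy
  by_contra! hlt
  obtain ⟨β, hβy, hβx⟩ := exists_between hlt
  set A := {z ∈ Icc x y | β < P z}
  have hxA : x ∈ A := ⟨⟨le_rfl, hxy⟩, hβx⟩
  obtain ⟨c, hlub⟩ : ∃ c, IsLUB A c := ⟨_, isLUB_csSup ⟨x, hxA⟩ ⟨y, fun z hz => hz.1.2⟩⟩
  have hxc : x ≤ c := hlub.1 hxA
  have hcy : c ≤ y := hlub.2 fun z hz => hz.1.2
  have hc : c ∈ Ioo s t := ⟨hx.1.trans_le hxc, hcy.trans_lt hy.2⟩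
  have hA_gt : ∀ z, c < z → z ≤ y → P z ≤ β := fun z hcz hzy => by
    by_contra! h
    exact (hlub.1 ⟨⟨hxc.trans hcz.le, hzy⟩, h⟩).not_gt hcz
  by_cases hcA : c ∈ A
  · have hcy' : c < y := hcy.lt_of_ne (by rintro rfl; exact hβy.not_gt hcA.2)
    obtain ⟨z, hβz, hz⟩ :=
      (((hright c hc).eventually (eventually_gt_nhds hcA.2)).and (Ioo_mem_nhdsGT hcy')).exists
    exact (hA_gt z hz.1 hz.2.le).not_gt (hβz.trans_le (hQP z ⟨hc.1.trans hz.1, hz.2.trans hy.2⟩))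
  · have hfreq : ∃ᶠ z in 𝓝[<] c, z ∈ A := by
      refine frequently_nhdsWithin_iff.2
        ((frequently_nhdsWithin_iff.1 (hlub.frequently_mem ⟨x, hxA⟩)).mono ?_)
      rintro z ⟨hzA, hzc⟩
      exact ⟨hzA, lt_of_le_of_ne hzc (ne_of_mem_of_not_mem hzA hcA)⟩
    refine hfreq ?_
    rcases hcy.lt_or_eq with hcy' | rfl
    · -- a point `c - h ∈ A` would put its mirror image `c + h` into `A`
      have hmap : map (c - ·) (𝓝[>] 0) = 𝓝[<] c := by rw [map_subLeft_nhdsGT, sub_zero]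
      rw [← hmap, eventually_map]
      filter_upwards [hsymm c hc, Ioo_mem_nhdsGT (sub_pos.2 hcy')] with h hPQ hh hA
      have hch : c < c + h := by linarith [hh.1]
      have hhy : c + h < y := by linarith [hh.2]
      exact (hA_gt _ hch hhy.le).not_gt
        (hA.2.trans (hPQ.trans_le (hQP _ ⟨hc.1.trans hch, hhy.trans hy.2⟩)))
    · filter_upwards [(hleft c hc).eventually (eventually_lt_nhds ((hQP c hc).trans_lt hβy))]
        with z hz hA using hz.not_gt hA.2

theorem lt_of_eventually_sub_lt_add (hst : s < t)
    (hsymm : ∀ x ∈ Ioo s t, ∀ᶠ h in 𝓝[>] 0, P (x - h) < Q (x + h))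
    (hright : ∀ x ∈ Ico s t, Tendsto Q (𝓝[>] x) (𝓝 (P x)))
    (hleft : ∀ x ∈ Ioc s t, Tendsto P (𝓝[<] x) (𝓝 (Q x))) :
    P s < Q t := by
  have hright' := fun x (hx : x ∈ Ioo s t) => hright x (Ioo_subset_Ico_self hx)
  have hleft' := fun x (hx : x ∈ Ioo s t) => hleft x (Ioo_subset_Ioc_self hx)
  have hQP : ∀ z ∈ Ioo s t, Q z ≤ P z := fun z hz =>
    le_of_eventually_sub_lt_add (hsymm z hz) (hright' z hz) (hleft' z hz)
  have hmono := monotoneOn_of_eventually_sub_lt_add hsymm hright' hleft'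
  set x := (s + t) / 2 with hx
  obtain ⟨h, hPQ, hh⟩ := ((hsymm x ⟨by linarith, by linarith⟩).and
    (Ioo_mem_nhdsGT (show 0 < (t - s) / 2 by linarith))).exists
  have hxmh : x - h ∈ Ioo s t := ⟨by linarith [hh.2], by linarith [hh.1]⟩
  have hxph : x + h ∈ Ioo s t := ⟨by linarith [hh.1], by linarith [hh.2]⟩
  calc P s ≤ P (x - h) := by
        refine le_of_tendsto (hright s ⟨le_rfl, hst⟩) ?_
        filter_upwards [Ioo_mem_nhdsGT hxmh.1] with z hz
        have hzI : z ∈ Ioo s t := ⟨hz.1, hz.2.trans hxmh.2⟩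
        exact (hQP z hzI).trans (hmono hzI hxmh hz.2.le)
    _ < Q (x + h) := hPQ
    _ ≤ P (x + h) := hQP _ hxph
    _ ≤ Q t := by
        refine ge_of_tendsto (hleft t ⟨hst, le_rfl⟩) ?_
        filter_upwards [Ioo_mem_nhdsLT hxph.2] with z hz
        exact hmono hxph ⟨hxph.1.trans hz.1, hz.2⟩ hz.1.le

end SymmetricIncrease

theorem StrictMonoOn.eventually_rightLim_sub_lt_leftLim_add {β : Type*} [LinearOrder β]
    [TopologicalSpace β] [OrderClosedTopology β] {g : ℝ → β} {U : Set ℝ}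
    (hg : StrictMonoOn g U) {x : ℝ} (hU : U ∈ 𝓝 x) :
    ∀ᶠ h in 𝓝[>] 0, rightLim g (x - h) < leftLim g (x + h) := by
  obtain ⟨ε, hε, hball⟩ := Metric.mem_nhds_iff.1 hU
  filter_upwards [Ioo_mem_nhdsGT hε] with h hh
  refine hg.rightLim_lt_leftLim (by linarith [hh.1]) ?_
  rw [← Real.closedBall_eq_Icc]
  exact (Metric.closedBall_subset_ball hh.2).trans hball

theorem HasDerivAlpha.eventually_mul_rightLim_sub_lt {f α : ℝ → ℝ} {x A c : ℝ}
    (hD : HasDerivAlpha f α x A) (hc : 0 < c * A)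
    (hα : ∀ᶠ h in 𝓝[>] 0, rightLim α (x - h) < leftLim α (x + h)) :
    ∀ᶠ h in 𝓝[>] 0, c * rightLim f (x - h) < c * leftLim f (x + h) := by
  filter_upwards [(hD.const_mul c).eventually (eventually_gt_nhds hc), hα] with h hq hden
  have hnum := mul_pos hq (sub_pos.2 hden)
  rw [mul_assoc, div_mul_cancel₀ _ (sub_pos.2 hden).ne'] at hnum
  linarith

theorem isOpen_setOf_memI (a b : EReal) : IsOpen {x : ℝ | MemI a b x} :=
  isOpen_Ioo.preimage continuous_coe_real_ereal

theorem ordConnected_setOf_memI (a b : EReal) : OrdConnected {x : ℝ | MemI a b x} :=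
  ordConnected_Ioo.preimage_mono EReal.coe_strictMono.monotone

theorem mul_rightLim_lt_mul_leftLim {a b : EReal} {f α D : ℝ → ℝ} (hf : RegulatedOn' f a b)
    (hα : StrictMonoOn α {x | MemI a b x}) {s t : ℝ} (hs : MemI a b s) (ht : MemI a b t)
    (hst : s < t) (hD : ∀ x ∈ Ioo s t, HasDerivAlpha f α x (D x)) {c : ℝ}
    (hc : ∀ x ∈ Ioo s t, 0 < c * D x) :
    c * rightLim f s < c * leftLim f t := by
  have hIcc : Icc s t ⊆ {x | MemI a b x} := (ordConnected_setOf_memI a b).out hs ht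
  refine lt_of_eventually_sub_lt_add (P := fun z => c * rightLim f z)
    (Q := fun z => c * leftLim f z) hst (fun x hx => ?_) (fun x hx => ?_) (fun x hx => ?_)
  · exact (hD x hx).eventually_mul_rightLim_sub_lt (hc x hx)
      (hα.eventually_rightLim_sub_lt_leftLim_add
        ((isOpen_setOf_memI a b).mem_nhds (hIcc (Ioo_subset_Icc_self hx))))
  · exact (tendsto_leftLim_nhdsGT_of_tendsto (tendsto_rightLim_of_tendsto
      (hf x (hIcc (Ico_subset_Icc_self hx))).2)).const_mul c
  · exact (tendsto_rightLim_nhdsLT_of_tendsto (tendsto_leftLim_of_tendsto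
      (hf x (hIcc (Ioc_subset_Icc_self hx))).1)).const_mul c

theorem stmt11_general (a b : EReal) (f α : ℝ → ℝ) (D : ℝ → ℝ)
    (hf : RegulatedOn' f a b) (hα : StrictMonoOn α {x : ℝ | MemI a b x})
    (hD : ∀ x : ℝ, MemI a b x → HasDerivAlpha f α x (D x))
    (s t : ℝ) (hs : MemI a b s) (ht : MemI a b t) (hst : s < t)
    (heq : rightLim f s = leftLim f t) :
    ∃ u ∈ Ioo s t, ∃ v ∈ Ioo s t, D u * D v ≤ 0 := by
  by_contra! hpos
  obtain ⟨u, hu⟩ := nonempty_Ioo.2 hst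
  have hlt := mul_rightLim_lt_mul_leftLim hf hα hs ht hst
    (fun x hx => hD x ((ordConnected_setOf_memI a b).out hs ht (Ioo_subset_Icc_self hx)))
    (hpos u hu)
  rw [heq] at hlt
  exact lt_irrefl _ hlt

/-- Rolle's theorem for regulated functions. -/
theorem stmt11 (a b : EReal) (hab : a < b) (f α : ℝ → ℝ) (D : ℝ → ℝ)
    (hf : RegulatedOn' f a b) (hα : StrictMonoOn α {x : ℝ | MemI a b x})
    (hD : ∀ x : ℝ, MemI a b x → HasDerivAlpha f α x (D x))
    (s t : ℝ) (hs : MemI a b s) (ht : MemI a b t) (hst : s < t)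
    (heq : rightLim f s = leftLim f t) :
    ∃ u ∈ Ioo s t, ∃ v ∈ Ioo s t, D u * D v ≤ 0 :=
  stmt11_general a b f α D hf hα hD s t hs ht hst heq
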